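/- For every y ∈ ℝ, ∫₀^∞ t^{-1/2} exp(-t - y²/(4t)) dt = √π · e^{-|y|}. -/

import Mathlib

/-!
Substituting `t = u ^ 2` turns the integrand into `2 e^{-|y|} e^{-(u - a/u)²}` with `a = |y| / 2`.
The Cauchy–Schlömilch substitution `s = u - a / u` maps `(0, ∞)` bijectively onto `ℝ` with
`ds = (1 + a / u²) du`, and the involution `u ↦ a / u` shows that the `a / u²` part contributes as
much as the `1` part. Hence `∫₀^∞ g (u - a / u) du = ½ ∫_ℝ g` for every even integrable `g`, and the
Gaussian integral finishes the computation.
-/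

open Real Filter Set MeasureTheory

section SubDiv

variable {a : ℝ}

lemma strictMonoOn_sub_div (ha : 0 ≤ a) : StrictMonoOn (fun u : ℝ => u - a / u) (Ioi 0) := by
  intro u hu v _ huv
  have : a / v ≤ a / u := div_le_div_of_nonneg_left ha hu huv.le
  simp only
  linarith

lemma image_sub_div_Ioi (ha : 0 < a) : (fun u : ℝ => u - a / u) '' Ioi 0 = univ := by
  refine eq_univ_of_forall fun s => ?_
  -- the positive root of `u ^ 2 - s * u - a`
  set r := √(s ^ 2 + 4 * a)
  have hr : r ^ 2 = s ^ 2 + 4 * a := sq_sqrt (by positivity)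
  have hsr : |s| < r := (lt_sqrt (abs_nonneg s)).2 (by rw [sq_abs]; linarith)
  have hu : 0 < (s + r) / 2 := by linarith [neg_abs_le s]
  refine ⟨(s + r) / 2, hu, ?_⟩
  have key : a = (s + r) / 2 * ((s + r) / 2 - s) := by linear_combination -hr / 4
  show (s + r) / 2 - a / ((s + r) / 2) = s
  rw [key, mul_div_cancel_left₀ _ hu.ne']
  ring

lemma hasDerivAt_const_div {x : ℝ} (hx : x ≠ 0) :
    HasDerivAt (fun u : ℝ => a / u) (-(a / x ^ 2)) x := by
  have h := (hasDerivAt_inv hx).const_mul a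
  simp only [← div_eq_mul_inv, mul_neg] at h
  exact h

lemma hasDerivAt_sub_div {x : ℝ} (hx : x ≠ 0) :
    HasDerivAt (fun u : ℝ => u - a / u) (1 + a / x ^ 2) x := by
  simpa only [sub_neg_eq_add] using (hasDerivAt_id' x).fun_sub (hasDerivAt_const_div hx)

lemma image_const_div_Ioi (ha : 0 < a) : (fun u : ℝ => a / u) '' Ioi 0 = Ioi 0 := by
  ext x
  constructor
  · rintro ⟨u, hu, rfl⟩
    exact div_pos ha hu
  · intro hx
    exact ⟨a / x, div_pos ha hx, div_div_cancel₀ ha.ne'⟩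

variable {E : Type*} [NormedAddCommGroup E] [NormedSpace ℝ E] {g : ℝ → E}

theorem integral_Ioi_div_sq_smul_comp_sub_div (heven : ∀ s, g (-s) = g s) (ha : 0 < a) :
    ∫ u in Ioi 0, (a / u ^ 2) • g (u - a / u) = ∫ u in Ioi 0, g (u - a / u) := by
  have hinj : InjOn (fun u : ℝ => a / u) (Ioi 0) := fun u _ v _ h => by
    simpa [div_eq_mul_inv, ha.ne'] using h
  conv_rhs => rw [← image_const_div_Ioi ha, integral_image_eq_integral_abs_deriv_smul
    measurableSet_Ioi (fun x hx => (hasDerivAt_const_div hx.ne').hasDerivWithinAt) hinj]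
  refine setIntegral_congr_fun measurableSet_Ioi fun x hx => ?_
  have hx : (0 : ℝ) < x := hx
  -- the involution `u ↦ a / u` of `Ioi 0` turns `u - a / u` into its negative
  have hflip : a / x - a / (a / x) = -(x - a / x) := by field_simp; ring
  simp only [abs_neg, abs_of_pos (by positivity : 0 < a / x ^ 2), hflip, heven]

theorem integral_Ioi_comp_sub_div_of_even (hg : Integrable g) (heven : ∀ s, g (-s) = g s)
    (ha : 0 < a) :
    ∫ u in Ioi 0, g (u - a / u) = (2 : ℝ)⁻¹ • ∫ s, g s := by
  set φ : ℝ → ℝ := fun u => u - a / u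
  have hφ' : ∀ x ∈ Ioi (0 : ℝ), HasDerivWithinAt φ (1 + a / x ^ 2) (Ioi 0) x :=
    fun x hx => (hasDerivAt_sub_div hx.ne').hasDerivWithinAt
  have hφinj : InjOn φ (Ioi 0) := (strictMonoOn_sub_div ha.le).injOn
  have habs : ∀ x ∈ Ioi (0 : ℝ), |1 + a / x ^ 2| = 1 + a / x ^ 2 :=
    fun x _ => abs_of_pos (by positivity)
  have hsplit : ∫ s, g s = ∫ u in Ioi 0, (1 + a / u ^ 2) • g (φ u) := by
    rw [← setIntegral_univ, ← image_sub_div_Ioi ha,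
      integral_image_eq_integral_abs_deriv_smul measurableSet_Ioi hφ' hφinj]
    exact setIntegral_congr_fun measurableSet_Ioi fun x hx => by rw [habs x hx]
  have hint_weighted : IntegrableOn (fun u => (1 + a / u ^ 2) • g (φ u)) (Ioi 0) := by
    have := (integrableOn_image_iff_integrableOn_abs_deriv_smul measurableSet_Ioi hφ' hφinj g).1
      (by rw [image_sub_div_Ioi ha]; exact hg.integrableOn)
    exact this.congr_fun (fun x hx => by simp only [habs x hx]) measurableSet_Ioi
  have hint : IntegrableOn (fun u => g (φ u)) (Ioi 0) := by
    have : IntegrableOn (fun u => (1 + a / u ^ 2)⁻¹ • (1 + a / u ^ 2) • g (φ u)) (Ioi 0) :=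
      hint_weighted.bdd_smul 1
        (by fun_prop : Measurable fun u : ℝ => (1 + a / u ^ 2)⁻¹).aestronglyMeasurable ?_
    · refine this.congr_fun (fun x hx => ?_) measurableSet_Ioi
      exact inv_smul_smul₀ (by positivity : (0 : ℝ) < 1 + a / x ^ 2).ne' _
    · filter_upwards [ae_restrict_mem measurableSet_Ioi] with x hx
      rw [norm_inv, Real.norm_of_nonneg (by positivity)]
      exact inv_le_one_of_one_le₀ (le_add_of_nonneg_right (by positivity))
  have hint_flip : IntegrableOn (fun u => (a / u ^ 2) • g (φ u)) (Ioi 0) :=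
    (hint_weighted.sub hint).congr_fun (fun x _ => by simp [add_smul]) measurableSet_Ioi
  rw [hsplit]
  simp_rw [add_smul, one_smul]
  rw [integral_add hint hint_flip, integral_Ioi_div_sq_smul_comp_sub_div heven ha]
  module

end SubDiv

theorem integral_Ioi_exp_neg_mul_sq_sub_div {a b : ℝ} (ha : 0 ≤ a) (hb : 0 < b) :
    ∫ u in Ioi 0, exp (-b * (u - a / u) ^ 2) = √(π / b) / 2 := by
  rcases ha.eq_or_lt with rfl | ha
  · simpa using integral_gaussian_Ioi b
  · rw [integral_Ioi_comp_sub_div_of_even (g := fun s => exp (-b * s ^ 2))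
      (integrable_exp_neg_mul_sq hb) (fun s => by simp only [neg_sq]) ha, integral_gaussian,
      smul_eq_mul]
    ring

theorem integral_Ioi_inv_sqrt_smul {E : Type*} [NormedAddCommGroup E] [NormedSpace ℝ E]
    (f : ℝ → E) : ∫ t in Ioi 0, (√t)⁻¹ • f t = (2 : ℝ) • ∫ u in Ioi 0, f (u ^ 2) := by
  rw [← integral_comp_rpow_Ioi_of_pos two_pos, ← integral_smul]
  refine setIntegral_congr_fun measurableSet_Ioi fun u hu => ?_
  have hu : (0 : ℝ) < u := hu
  norm_num [rpow_two, smul_smul, sqrt_sq hu.le, hu.ne']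

/-- `∫₀^∞ t^{-1/2} exp (-t - y²/(4t)) dt = √π e^{-|y|}` for all real `y`. -/
theorem stmt_7 (y : ℝ) :
    ∫ t in Ioi (0 : ℝ), (Real.sqrt t)⁻¹ * Real.exp (-t - y ^ 2 / (4 * t))
      = Real.sqrt π * Real.exp (-|y|) := by
  set a := |y| / 2
  have hexp : ∀ u ∈ Ioi (0 : ℝ),
      exp (-u ^ 2 - y ^ 2 / (4 * u ^ 2)) = exp (-|y|) * exp (-1 * (u - a / u) ^ 2) := by
    intro u hu
    have hu : u ≠ 0 := ne_of_gt hu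
    rw [← exp_add, ← sq_abs y]
    congr 1
    field_simp
    ring
  calc ∫ t in Ioi (0 : ℝ), (√t)⁻¹ * exp (-t - y ^ 2 / (4 * t))
      = 2 * ∫ u in Ioi 0, exp (-u ^ 2 - y ^ 2 / (4 * u ^ 2)) :=
        integral_Ioi_inv_sqrt_smul fun t => exp (-t - y ^ 2 / (4 * t))
    _ = 2 * (exp (-|y|) * ∫ u in Ioi 0, exp (-1 * (u - a / u) ^ 2)) := by
        rw [setIntegral_congr_fun measurableSet_Ioi hexp, integral_const_mul]
    _ = √π * exp (-|y|) := by
        rw [integral_Ioi_exp_neg_mul_sq_sub_div (by positivity) one_pos, div_one]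
        ring
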